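/- Let m ≥ 1 and n_1, ..., n_m be positive reals, ρ > 0. Consider the game on N = {g, 1, ..., m} with ξ_lin(S) = 0 if g ∉ S and ξ_lin(S) = ρ·∑_{i ∈ S \ {g}} n_i if g ∈ S. Then φ_g(ξ_lin) = ρ(∑_i n_i)/2 and φ_i(ξ_lin) = ρ n_i/2 for each agent i; i.e. under the linear value with a founder, the founder takes exactly half the total value and each agent takes half of its own contribution. -/

import Mathlib

/-!
The founder game is the linear combination `ξ = ∑ⱼ ρ nⱼ u_{g,j}` of the unanimity games of the
pairs `{g, j}`, so by linearity it suffices that the Shapley value of `u_{a,b}` is `1/2` for `a`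
and `b` and `0` for everyone else. The value of `a` in `u_{a,b}` is the total Shapley weight of the
coalitions of `N \ {a}` containing `b`. Complementation inside `N \ {a}` preserves the weights
(they only depend on `|S|` and are symmetric under `|S| ↦ |N| - 1 - |S|`) and exchanges coalitions
containing `b` with those avoiding it; since all weights add up to `1`, each half carries `1/2`.
-/

open Finset

noncomputable def shapley {α : Type*} [DecidableEq α] (N : Finset α) (ν : Finset α → ℝ)
    (i : α) : ℝ :=
  ∑ S ∈ (N.erase i).powerset,
    (((S.card.factorial : ℝ) * ((N.card - S.card - 1).factorial : ℝ)) / (N.card.factorial : ℝ)) *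
      (ν (insert i S) - ν S)

open scoped Nat

noncomputable def shapleyWeight (n s : ℕ) : ℝ := (s ! * (n - s - 1)! : ℝ) / n !

noncomputable def unanimityGame {α : Type*} [DecidableEq α] (T S : Finset α) : ℝ :=
  if T ⊆ S then 1 else 0

section Weights

variable {α : Type*}

theorem shapleyWeight_sub (n k : ℕ) (hk : k ≤ n) :
    shapleyWeight (n + 1) (n - k) = shapleyWeight (n + 1) k := by
  unfold shapleyWeight
  rw [show n + 1 - (n - k) - 1 = k by omega, show n + 1 - k - 1 = n - k by omega, mul_comm]

theorem sum_powerset_shapleyWeight (A : Finset α) :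
    ∑ S ∈ A.powerset, shapleyWeight (#A + 1) #S = 1 := by
  rw [sum_powerset_apply_card (fun k => shapleyWeight (#A + 1) k)]
  have hterm : ∀ k ∈ range (#A + 1),
      (#A).choose k • shapleyWeight (#A + 1) k = 1 / (#A + 1) := by
    intro k hk
    have hk : k ≤ #A := Nat.lt_succ_iff.mp (mem_range.mp hk)
    have hchoose : ((#A).choose k * (k ! * (#A - k)!) : ℝ) = (#A)! := by
      rw [← mul_assoc]
      exact_mod_cast Nat.choose_mul_factorial_mul_factorial hk
    rw [nsmul_eq_mul, shapleyWeight, show #A + 1 - k - 1 = #A - k by omega, Nat.factorial_succ]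
    push_cast
    rw [← mul_div_assoc, hchoose]
    field_simp
  rw [sum_congr rfl hterm, sum_const, card_range, nsmul_eq_mul]
  push_cast
  field_simp

theorem sum_powerset_filter_mem_shapleyWeight [DecidableEq α] {A : Finset α} {a : α}
    (ha : a ∈ A) :
    ∑ S ∈ A.powerset with a ∈ S, shapleyWeight (#A + 1) #S = 1 / 2 := by
  have hcompl : ∑ S ∈ A.powerset with a ∈ S, shapleyWeight (#A + 1) #S =
      ∑ S ∈ A.powerset with a ∉ S, shapleyWeight (#A + 1) #S := by
    refine sum_nbij' (A \ ·) (A \ ·) ?_ ?_ ?_ ?_ ?_ <;> simp only [mem_filter, mem_powerset]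
    · rintro S ⟨-, haS⟩
      exact ⟨sdiff_subset, fun h => (mem_sdiff.mp h).2 haS⟩
    · rintro S ⟨-, haS⟩
      exact ⟨sdiff_subset, mem_sdiff.mpr ⟨ha, haS⟩⟩
    · rintro S ⟨hS, -⟩
      exact Finset.sdiff_sdiff_eq_self hS
    · rintro S ⟨hS, -⟩
      exact Finset.sdiff_sdiff_eq_self hS
    · rintro S ⟨hS, -⟩
      rw [card_sdiff_of_subset hS, shapleyWeight_sub _ _ (card_le_card hS)]
  have htotal :=
    sum_filter_add_sum_filter_not A.powerset (a ∈ ·) (fun S => shapleyWeight (#A + 1) #S)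
  rw [sum_powerset_shapleyWeight, ← hcompl] at htotal
  linarith

end Weights

section Shapley

variable {α : Type*} [DecidableEq α] {N : Finset α}

theorem shapley_eq_sum_shapleyWeight (ν : Finset α → ℝ) (i : α) :
    shapley N ν i =
      ∑ S ∈ (N.erase i).powerset, shapleyWeight #N #S * (ν (insert i S) - ν S) :=
  rfl

theorem shapley_sum {ι : Type*} (J : Finset ι) (ν : ι → Finset α → ℝ) (i : α) :
    shapley N (fun S => ∑ j ∈ J, ν j S) i = ∑ j ∈ J, shapley N (ν j) i := by
  simp only [shapley_eq_sum_shapleyWeight, ← sum_sub_distrib, mul_sum]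
  exact sum_comm

theorem shapley_const_mul (c : ℝ) (ν : Finset α → ℝ) (i : α) :
    shapley N (fun S => c * ν S) i = c * shapley N ν i := by
  simp only [shapley_eq_sum_shapleyWeight, mul_sum, ← mul_sub]
  exact sum_congr rfl fun S _ => by ring

theorem shapley_eq_zero_of_forall_insert_eq {ν : Finset α → ℝ} {i : α}
    (h : ∀ S ⊆ N.erase i, ν (insert i S) = ν S) : shapley N ν i = 0 := by
  rw [shapley_eq_sum_shapleyWeight]
  exact sum_eq_zero fun S hS => by rw [h S (mem_powerset.mp hS), sub_self, mul_zero]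

theorem shapley_unanimityGame_pair_left {a b : α} (ha : a ∈ N) (hb : b ∈ N) (hab : a ≠ b) :
    shapley N (unanimityGame {a, b}) a = 1 / 2 := by
  have hmarg : ∀ S ∈ (N.erase a).powerset,
      unanimityGame {a, b} (insert a S) - unanimityGame {a, b} S = if b ∈ S then 1 else 0 := by
    intro S hS
    have haS : a ∉ S := fun h => (mem_erase.mp (mem_powerset.mp hS h)).1 rfl
    simp [unanimityGame, insert_subset_iff, haS, hab.symm]
  rw [shapley_eq_sum_shapleyWeight, sum_congr rfl fun S hS => by rw [hmarg S hS],
    ← card_erase_add_one ha]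
  simp only [mul_ite, mul_one, mul_zero, ← sum_filter]
  exact sum_powerset_filter_mem_shapleyWeight (mem_erase.mpr ⟨hab.symm, hb⟩)

theorem shapley_unanimityGame_pair_right {a b : α} (ha : a ∈ N) (hb : b ∈ N) (hab : a ≠ b) :
    shapley N (unanimityGame {a, b}) b = 1 / 2 := by
  rw [pair_comm]
  exact shapley_unanimityGame_pair_left hb ha hab.symm

theorem shapley_unanimityGame_of_notMem {T : Finset α} {i : α} (hi : i ∉ T) :
    shapley N (unanimityGame T) i = 0 :=
  shapley_eq_zero_of_forall_insert_eq fun S _ => by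
    simp only [unanimityGame, subset_insert_iff_of_notMem hi]

end Shapley

theorem stmt_19_general (m : ℕ) (nv : Fin m → ℝ)
    (ρ : ℝ)
    (ξ : Finset (Option (Fin m)) → ℝ)
    (hξ : ∀ S, ξ S = if none ∈ S then
      ρ * ∑ i ∈ Finset.univ.filter (fun i : Fin m => some i ∈ S), nv i else 0) :
    shapley Finset.univ ξ none = ρ * (∑ i, nv i) / 2 ∧
    (∀ i : Fin m, shapley Finset.univ ξ (some i) = ρ * nv i / 2) := by
  obtain rfl : ξ = fun S => ∑ j, ρ * nv j * unanimityGame {none, some j} S := by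
    funext S
    simp only [hξ, unanimityGame, insert_subset_iff, singleton_subset_iff]
    split_ifs with hS
    · simp only [hS, true_and, mul_ite, mul_one, mul_zero, ← sum_filter, mul_sum]
    · simp [hS]
  simp only [shapley_sum, shapley_const_mul]
  refine ⟨?_, fun i => ?_⟩
  · rw [sum_congr rfl fun j _ => by
      rw [shapley_unanimityGame_pair_left (mem_univ _) (mem_univ _) (Option.some_ne_none j).symm],
      ← sum_mul, ← mul_sum]
    ring
  · rw [sum_eq_single i, shapley_unanimityGame_pair_right (mem_univ _) (mem_univ _)
      (Option.some_ne_none i).symm]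
    · ring
    · intro j _ hji
      rw [shapley_unanimityGame_of_notMem (by simp [hji.symm]), mul_zero]
    · simp

theorem stmt_19 (m : ℕ) (hm : 1 ≤ m) (nv : Fin m → ℝ) (hnv : ∀ i, 0 < nv i)
    (ρ : ℝ) (hρ : 0 < ρ)
    (ξ : Finset (Option (Fin m)) → ℝ)
    (hξ : ∀ S, ξ S = if none ∈ S then
      ρ * ∑ i ∈ Finset.univ.filter (fun i : Fin m => some i ∈ S), nv i else 0) :
    shapley Finset.univ ξ none = ρ * (∑ i, nv i) / 2 ∧
    (∀ i : Fin m, shapley Finset.univ ξ (some i) = ρ * nv i / 2) :=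
  stmt_19_general m nv ρ ξ hξ
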